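/- arXiv:2103.04277 — 2 statements merged into one kernel-verified Lean document; each statement's English description precedes it below -/
import Mathlib

section
/- Let (Ω, P) carry a {0,1}-valued random variable W with P(W = 1) = e ∈ (0,1) and random variables Y₀, C₀, Y₁, C₁ ≥ 0 with W independent of (Y₀, C₀, Y₁, C₁) and, for each w ∈ {0,1}, Y_w independent of C_w. Let λ : [0,∞) → [0,∞) be measurable and locally integrable, Λ(y) := ∫₀^y λ(t) dt, and η₀, η₁ ∈ ℝ with P(Y_w > y) = exp(−Λ(y)·exp(η_w)) for all y ≥ 0 and w ∈ {0,1}, with each Y_w real-valued. Define p_w := P(C_w ≥ Y_w), assume e·p₁ + (1−e)·p₀ > 0, and set a := e·p₁/(e·p₁ + (1−e)·p₀), η_W := W·η₁ + (1−W)·η₀, and Y^c := min(Y_W, C_W) (i.e., W·min(Y₁,C₁) + (1−W)·min(Y₀,C₀)). Then E[(W − a) · exp(η_W) · Λ(Y^c)] = 0. (This verifies, at a fixed covariate value, that the ρ-derivative of the Cox full-likelihood score vanishes at the true nuisance functions — the Neyman orthogonality established in the proof of the paper's Proposition 2.) -/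
/-!
Because `W` is binary, `exp(η_W)·Λ(Y^c) = W·u₁ + (1 - W)·u₀` with
`u_w = Λ(min(Y_w, C_w))·exp(η_w)`, and the independence of `W` from the arms splits the
expectation into `(1 - a)·e·E[u₁] - a·(1 - e)·E[u₀]`, which vanishes by the choice of `a` as soon
as `E[u_w] = p_w`. That is the compensator identity of the censored counting process: for the
cumulative hazard `H = Λ·exp(η)` and a fixed `c ≥ 0`, Tonelli gives
`E[H(min(Y, c))] = ∫₀^c P(Y > t) dH(t) = ∫₀^c exp(-H) dH = 1 - exp(-H(c)) = P(Y ≤ c)`, the middle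
step being the fundamental theorem of calculus for the absolutely continuous function `exp(-H)`;
integrating over the independent `C` gives `P(Y ≤ C)`.
-/

open MeasureTheory Set

open Filter Topology ProbabilityTheory

theorem LipschitzOnWith.comp_absolutelyContinuousOnInterval {X Y : Type*} [PseudoMetricSpace X]
    [PseudoMetricSpace Y] {g : X → Y} {f : ℝ → X} {K : NNReal} {s : Set X} {a b : ℝ}
    (hg : LipschitzOnWith K g s) (hf : AbsolutelyContinuousOnInterval f a b)
    (hfs : MapsTo f (uIcc a b) s) : AbsolutelyContinuousOnInterval (g ∘ f) a b := by
  have hK : Tendsto (fun E : ℕ × (ℕ → ℝ × ℝ) ↦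
      K * ∑ i ∈ Finset.range E.1, dist (f (E.2 i).1) (f (E.2 i).2))
      (AbsolutelyContinuousOnInterval.totalLengthFilter ⊓
        𝓟 (AbsolutelyContinuousOnInterval.disjWithin a b)) (𝓝 0) := by
    simpa only [mul_zero] using Tendsto.const_mul (K : ℝ) hf
  refine squeeze_zero' (Eventually.of_forall fun _ ↦ Finset.sum_nonneg fun _ _ ↦ dist_nonneg) ?_ hK
  filter_upwards [mem_inf_of_right (mem_principal_self _)] with E hE
  rw [Finset.mul_sum]
  exact Finset.sum_le_sum fun i hi ↦
    hg.dist_le_mul _ (hfs (hE.1 i hi).1) _ (hfs (hE.1 i hi).2)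

theorem integral_mul_exp_neg_integral {f : ℝ → ℝ} {a b : ℝ}
    (hf : IntervalIntegrable f volume a b) :
    ∫ t in a..b, f t * Real.exp (-∫ s in a..t, f s) = 1 - Real.exp (-∫ s in a..b, f s) := by
  set F : ℝ → ℝ := fun t ↦ ∫ s in a..t, f s
  have hF : AbsolutelyContinuousOnInterval F a b :=
    hf.absolutelyContinuousOnInterval_intervalIntegral left_mem_uIcc
  obtain ⟨R, hR⟩ := (Metric.isBounded_iff_subset_closedBall 0).1
    (isCompact_uIcc.image_of_continuousOn hF.continuousOn).isBounded
  obtain ⟨K, hK⟩ := (Real.contDiff_exp.comp contDiff_neg).contDiffOn.exists_lipschitzOnWith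
    one_ne_zero (convex_closedBall (0 : ℝ) R) (isCompact_closedBall 0 R)
  have hexpF : AbsolutelyContinuousOnInterval (fun t ↦ Real.exp (-F t)) a b :=
    hK.comp_absolutelyContinuousOnInterval hF (mapsTo_iff_image_subset.2 hR)
  have hderiv : ∀ᵐ t, t ∈ uIoc a b →
      deriv (fun t ↦ Real.exp (-F t)) t = -(f t * Real.exp (-F t)) := by
    filter_upwards [hf.ae_hasDerivAt_integral] with t ht htab
    have hFt : HasDerivAt F (f t) t := ht (uIoc_subset_uIcc htab) a left_mem_uIcc
    have : HasDerivAt (fun t ↦ Real.exp (-F t)) (Real.exp (-F t) * -f t) t := hFt.neg.exp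
    rw [this.deriv]
    ring
  calc ∫ t in a..b, f t * Real.exp (-F t)
      = -∫ t in a..b, deriv (fun t ↦ Real.exp (-F t)) t := by
        rw [intervalIntegral.integral_congr_ae hderiv, intervalIntegral.integral_neg, neg_neg]
    _ = 1 - Real.exp (-F b) := by
        simp [hexpF.integral_deriv_eq_sub, F]

theorem continuous_integral_of_forall_intervalIntegrable {f : ℝ → ℝ}
    (hf : ∀ y, IntervalIntegrable f volume 0 y) : Continuous fun y ↦ ∫ t in (0 : ℝ)..y, f t :=
  intervalIntegral.continuous_primitive (fun a b ↦ (hf a).symm.trans (hf b)) 0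

theorem lintegral_ofReal_integral_min_eq_setLIntegral {μ : Measure ℝ} [SFinite μ] {h : ℝ → ℝ}
    {c : ℝ} (hc : 0 ≤ c) (hh : IntegrableOn h (Ioo 0 c)) (hnn : ∀ t ∈ Ioo 0 c, 0 ≤ h t)
    (hμ : ∀ᵐ y ∂μ, 0 ≤ y) :
    ∫⁻ y, ENNReal.ofReal (∫ t in (0 : ℝ)..min y c, h t) ∂μ =
      ∫⁻ t in Ioo 0 c, ENNReal.ofReal (h t) * μ (Ioi t) := by
  set ν := (volume.restrict (Ioo 0 c)).withDensity fun t ↦ ENNReal.ofReal (h t)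
  have hS : MeasurableSet {p : ℝ × ℝ | p.2 < p.1} := measurableSet_lt measurable_snd measurable_fst
  have hν : ∀ y, 0 ≤ y → ν (Iio y) = ENNReal.ofReal (∫ t in (0 : ℝ)..min y c, h t) := by
    intro y hy
    have hsub : Ioo 0 (min y c) ⊆ Ioo 0 c := Ioo_subset_Ioo_right (min_le_right _ _)
    rw [withDensity_apply _ measurableSet_Iio, Measure.restrict_restrict measurableSet_Iio,
      inter_comm, Ioo_inter_Iio, intervalIntegral.integral_of_le (le_min hy hc),
      integral_Ioc_eq_integral_Ioo, min_comm c y, ofReal_integral_eq_lintegral_ofReal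
        (hh.mono_set hsub) ((ae_restrict_iff' measurableSet_Ioo).2
          (Eventually.of_forall fun t ht ↦ hnn t (hsub ht)))]
  calc ∫⁻ y, ENNReal.ofReal (∫ t in (0 : ℝ)..min y c, h t) ∂μ
      = ∫⁻ y, ν (Iio y) ∂μ := lintegral_congr_ae (hμ.mono fun y hy ↦ (hν y hy).symm)
    _ = (μ.prod ν) {p | p.2 < p.1} := (Measure.prod_apply hS).symm
    _ = ∫⁻ t, μ (Ioi t) ∂ν := Measure.prod_apply_symm hS
    _ = ∫⁻ t in Ioo 0 c, ENNReal.ofReal (h t) * μ (Ioi t) :=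
      lintegral_withDensity_eq_lintegral_mul₀ hh.aemeasurable.ennreal_ofReal
        (Antitone.measurable fun _ _ hst ↦ measure_mono (Ioi_subset_Ioi hst)).aemeasurable

theorem lintegral_ofReal_integral_min_eq_measure_Iic {μ : Measure ℝ} [IsProbabilityMeasure μ]
    {h : ℝ → ℝ} {c : ℝ} (hc : 0 ≤ c) (hh : IntervalIntegrable h volume 0 c)
    (hnn : ∀ t ∈ Ioo 0 c, 0 ≤ h t) (hμ : ∀ᵐ y ∂μ, 0 ≤ y)
    (hsurv : ∀ y ≥ 0, μ (Ioi y) = ENNReal.ofReal (Real.exp (-∫ t in (0 : ℝ)..y, h t))) :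
    ∫⁻ y, ENNReal.ofReal (∫ t in (0 : ℝ)..min y c, h t) ∂μ = μ (Iic c) := by
  have hH : ContinuousOn (fun t ↦ ∫ s in (0 : ℝ)..t, h s) (uIcc 0 c) :=
    (hh.absolutelyContinuousOnInterval_intervalIntegral left_mem_uIcc).continuousOn
  have hint : IntegrableOn (fun t ↦ h t * Real.exp (-∫ s in (0 : ℝ)..t, h s)) (Ioo 0 c) :=
    ((hh.mul_continuousOn hH.neg.rexp).1).mono_set Ioo_subset_Ioc_self
  rw [lintegral_ofReal_integral_min_eq_setLIntegral hc (hh.1.mono_set Ioo_subset_Ioc_self) hnn hμ]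
  calc ∫⁻ t in Ioo 0 c, ENNReal.ofReal (h t) * μ (Ioi t)
      = ∫⁻ t in Ioo 0 c, ENNReal.ofReal (h t * Real.exp (-∫ s in (0 : ℝ)..t, h s)) := by
        refine setLIntegral_congr_fun measurableSet_Ioo fun t ht ↦ ?_
        rw [hsurv t ht.1.le, ENNReal.ofReal_mul (hnn t ht)]
    _ = ENNReal.ofReal (1 - Real.exp (-∫ t in (0 : ℝ)..c, h t)) := by
        have hnn' : 0 ≤ᵐ[volume.restrict (Ioo 0 c)] fun t ↦
            h t * Real.exp (-∫ s in (0 : ℝ)..t, h s) :=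
          (ae_restrict_iff' measurableSet_Ioo).2
            (Eventually.of_forall fun t ht ↦ mul_nonneg (hnn t ht) (Real.exp_pos _).le)
        rw [← ofReal_integral_eq_lintegral_ofReal hint hnn', ← integral_Ioc_eq_integral_Ioo,
          ← intervalIntegral.integral_of_le hc, integral_mul_exp_neg_integral hh]
    _ = μ (Iic c) := by
        rw [← compl_Ioi, prob_compl_eq_one_sub measurableSet_Ioi, hsurv c hc,
          ENNReal.ofReal_sub _ (Real.exp_pos _).le, ENNReal.ofReal_one]

theorem lintegral_ofReal_integral_min_eq_measure_le {Ω : Type*} [MeasurableSpace Ω]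
    {P : Measure Ω} [IsProbabilityMeasure P] {Y C : Ω → ℝ} (hY : Measurable Y)
    (hC : Measurable C) (hind : IndepFun Y C P) (hYnn : ∀ᵐ ω ∂P, 0 ≤ Y ω) (hCnn : ∀ᵐ ω ∂P, 0 ≤ C ω)
    {h : ℝ → ℝ} (hh : ∀ y, IntervalIntegrable h volume 0 y) (hnn : ∀ t ≥ 0, 0 ≤ h t)
    (hsurv : ∀ y ≥ 0, P {ω | y < Y ω} = ENNReal.ofReal (Real.exp (-∫ t in (0 : ℝ)..y, h t))) :
    ∫⁻ ω, ENNReal.ofReal (∫ t in (0 : ℝ)..min (Y ω) (C ω), h t) ∂P = P {ω | Y ω ≤ C ω} := by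
  have := Measure.isProbabilityMeasure_map (μ := P) hY.aemeasurable
  have hmap : P.map (fun ω ↦ (Y ω, C ω)) = (P.map Y).prod (P.map C) :=
    (indepFun_iff_map_prod_eq_prod_map_map hY.aemeasurable hC.aemeasurable).1 hind
  set F : ℝ × ℝ → ENNReal := fun p ↦ ENNReal.ofReal (∫ t in (0 : ℝ)..min p.1 p.2, h t)
  have hF : Measurable F := ((continuous_integral_of_forall_intervalIntegrable hh).measurable.comp
    (measurable_fst.min measurable_snd)).ennreal_ofReal
  have hS : MeasurableSet {p : ℝ × ℝ | p.1 ≤ p.2} := measurableSet_le measurable_fst measurable_snd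
  have hCnn' : ∀ᵐ c ∂P.map C, 0 ≤ c := (ae_map_iff hC.aemeasurable measurableSet_Ici).2 hCnn
  calc ∫⁻ ω, F (Y ω, C ω) ∂P
      = ∫⁻ c, ∫⁻ y, F (y, c) ∂P.map Y ∂P.map C := by
        rw [← lintegral_map hF (hY.prodMk hC), hmap, lintegral_prod_symm' _ hF]
    _ = ∫⁻ c, P.map Y (Iic c) ∂P.map C := by
        refine lintegral_congr_ae (hCnn'.mono fun c hc ↦ ?_)
        refine lintegral_ofReal_integral_min_eq_measure_Iic hc (hh c)
          (fun t ht ↦ hnn t ht.1.le)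
          ((ae_map_iff hY.aemeasurable measurableSet_Ici).2 hYnn) fun y hy ↦ ?_
        rw [Measure.map_apply hY measurableSet_Ioi]
        exact hsurv y hy
    _ = (P.map Y).prod (P.map C) {p | p.1 ≤ p.2} := (Measure.prod_apply_symm hS).symm
    _ = P {ω | Y ω ≤ C ω} := by rw [← hmap, Measure.map_apply (hY.prodMk hC) hS]; rfl

theorem integrable_integral_min_and_integral_eq_measure_le {Ω : Type*} [MeasurableSpace Ω]
    {P : Measure Ω} [IsProbabilityMeasure P] {Y C : Ω → ℝ} (hY : Measurable Y)
    (hC : Measurable C) (hind : IndepFun Y C P) (hYnn : ∀ᵐ ω ∂P, 0 ≤ Y ω)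
    (hCnn : ∀ᵐ ω ∂P, 0 ≤ C ω) {h : ℝ → ℝ} (hh : ∀ y, IntervalIntegrable h volume 0 y)
    (hnn : ∀ t ≥ 0, 0 ≤ h t)
    (hsurv : ∀ y ≥ 0, P {ω | y < Y ω} = ENNReal.ofReal (Real.exp (-∫ t in (0 : ℝ)..y, h t))) :
    Integrable (fun ω ↦ ∫ t in (0 : ℝ)..min (Y ω) (C ω), h t) P ∧
      ∫ ω, (∫ t in (0 : ℝ)..min (Y ω) (C ω), h t) ∂P = (P {ω | Y ω ≤ C ω}).toReal := by
  have hm : AEStronglyMeasurable (fun ω ↦ ∫ t in (0 : ℝ)..min (Y ω) (C ω), h t) P :=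
    ((continuous_integral_of_forall_intervalIntegrable hh).measurable.comp
      (hY.min hC)).aestronglyMeasurable
  have hpos : 0 ≤ᵐ[P] fun ω ↦ ∫ t in (0 : ℝ)..min (Y ω) (C ω), h t := by
    filter_upwards [hYnn, hCnn] with ω hYω hCω
    exact intervalIntegral.integral_nonneg (le_min hYω hCω) fun t ht ↦ hnn t ht.1
  have hlin := lintegral_ofReal_integral_min_eq_measure_le hY hC hind hYnn hCnn hh hnn hsurv
  refine ⟨⟨hm, ?_⟩, ?_⟩
  · rw [hasFiniteIntegral_iff_ofReal hpos, hlin]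
    exact measure_lt_top P _
  · rw [integral_eq_lintegral_of_nonneg_ae hpos hm, hlin]

theorem integral_sub_mul_select_eq {Ω β : Type*} [MeasurableSpace Ω] [MeasurableSpace β]
    {P : Measure Ω} [IsProbabilityMeasure P] {W : Ω → ℝ} {V : Ω → β} (hW : Measurable W)
    (hW01 : ∀ ω, W ω = 0 ∨ W ω = 1) (hind : IndepFun W V P) {f₀ f₁ : β → ℝ}
    (hf₀ : Measurable f₀) (hf₁ : Measurable f₁) (hi₀ : Integrable (fun ω ↦ f₀ (V ω)) P)
    (hi₁ : Integrable (fun ω ↦ f₁ (V ω)) P) (a : ℝ) :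
    ∫ ω, (W ω - a) * (W ω * f₁ (V ω) + (1 - W ω) * f₀ (V ω)) ∂P =
      (1 - a) * (P {ω | W ω = 1}).toReal * ∫ ω, f₁ (V ω) ∂P -
        a * (1 - (P {ω | W ω = 1}).toReal) * ∫ ω, f₀ (V ω) ∂P := by
  have hW1 : MeasurableSet {ω | W ω = 1} := hW (measurableSet_singleton 1)
  have hWind : W = {ω | W ω = 1}.indicator 1 :=
    funext fun ω ↦ by rcases hW01 ω with h | h <;> simp [h]
  have hEW : ∫ ω, W ω ∂P = (P {ω | W ω = 1}).toReal := by
    conv_lhs => rw [hWind]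
    exact integral_indicator_one hW1
  have hWint : Integrable W P := by
    rw [hWind]; exact (integrable_const 1).indicator hW1
  set A : Ω → ℝ := fun ω ↦ W ω * (1 - a)
  set B : Ω → ℝ := fun ω ↦ (1 - W ω) * -a
  have hA : Integrable A P := hWint.mul_const _
  have hB : Integrable B P := ((integrable_const 1).sub hWint).mul_const _
  have hAf : ∫ ω, A ω * f₁ (V ω) ∂P = (∫ ω, A ω ∂P) * ∫ ω, f₁ (V ω) ∂P :=
    IndepFun.integral_fun_mul_eq_mul_integral (hind.comp (measurable_id.mul_const _) hf₁)
      hA.aestronglyMeasurable hi₁.aestronglyMeasurable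
  have hBf : ∫ ω, B ω * f₀ (V ω) ∂P = (∫ ω, B ω ∂P) * ∫ ω, f₀ (V ω) ∂P :=
    IndepFun.integral_fun_mul_eq_mul_integral
      (hind.comp ((measurable_const.sub measurable_id).mul_const _) hf₀)
      hB.aestronglyMeasurable hi₀.aestronglyMeasurable
  have hsplit : ∀ ω, (W ω - a) * (W ω * f₁ (V ω) + (1 - W ω) * f₀ (V ω)) =
      A ω * f₁ (V ω) + B ω * f₀ (V ω) := fun ω ↦ by
    rcases hW01 ω with h | h <;> simp [A, B, h]
  have hAf_int : Integrable (fun ω ↦ A ω * f₁ (V ω)) P :=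
    hi₁.bdd_mul (c := |1 - a|) hA.aestronglyMeasurable
      (.of_forall fun ω ↦ by rcases hW01 ω with h | h <;> simp [A, h])
  have hBf_int : Integrable (fun ω ↦ B ω * f₀ (V ω)) P :=
    hi₀.bdd_mul (c := |a|) hB.aestronglyMeasurable
      (.of_forall fun ω ↦ by rcases hW01 ω with h | h <;> simp [B, h])
  rw [integral_congr_ae (.of_forall hsplit), integral_add hAf_int hBf_int, hAf, hBf,
    integral_mul_const, integral_mul_const, integral_sub (integrable_const 1) hWint, hEW]
  simp only [integral_const, probReal_univ, smul_eq_mul, one_mul]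
  ring

theorem integrable_and_integral_primitive_min_mul_exp_eq {Ω : Type*} [MeasurableSpace Ω]
    {P : Measure Ω} [IsProbabilityMeasure P] {Y C : Ω → ℝ} (hY : Measurable Y)
    (hC : Measurable C) (hind : IndepFun Y C P) (hYnn : ∀ ω, 0 ≤ Y ω) (hCnn : ∀ ω, 0 ≤ C ω)
    {lam Λ : ℝ → ℝ} (hloc : ∀ y, IntervalIntegrable lam volume 0 y) (hlnn : ∀ t ≥ 0, 0 ≤ lam t)
    (hΛ : ∀ y, Λ y = ∫ t in (0 : ℝ)..y, lam t) {η : ℝ}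
    (hsurv : ∀ y ≥ 0, P {ω | Y ω > y} = ENNReal.ofReal (Real.exp (-(Λ y * Real.exp η)))) :
    Integrable (fun ω ↦ Λ (min (Y ω) (C ω)) * Real.exp η) P ∧
      ∫ ω, Λ (min (Y ω) (C ω)) * Real.exp η ∂P = (P {ω | C ω ≥ Y ω}).toReal := by
  have hscaled : ∀ y, ∫ t in (0 : ℝ)..y, lam t * Real.exp η = Λ y * Real.exp η := fun y ↦ by
    rw [intervalIntegral.integral_mul_const, hΛ]
  simpa only [hscaled] using integrable_integral_min_and_integral_eq_measure_le hY hC hind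
    (.of_forall hYnn) (.of_forall hCnn) (fun y ↦ (hloc y).mul_const (Real.exp η))
    (fun t ht ↦ mul_nonneg (hlnn t ht) (Real.exp_pos η).le) (by simpa only [hscaled] using hsurv)

theorem dina_cox_full_likelihood_orthogonality_general
    {Ω : Type*} [MeasurableSpace Ω] (P : Measure Ω) [IsProbabilityMeasure P]
    (W Y₀ C₀ Y₁ C₁ : Ω → ℝ)
    (hW : Measurable W) (hW01 : ∀ ω, W ω = 0 ∨ W ω = 1)
    (hY₀ : Measurable Y₀) (hC₀ : Measurable C₀)
    (hY₁ : Measurable Y₁) (hC₁ : Measurable C₁)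
    (hY₀nn : ∀ ω, 0 ≤ Y₀ ω) (hC₀nn : ∀ ω, 0 ≤ C₀ ω)
    (hY₁nn : ∀ ω, 0 ≤ Y₁ ω) (hC₁nn : ∀ ω, 0 ≤ C₁ ω)
    (e : ℝ) (heW : (P {ω | W ω = 1}).toReal = e)
    (hind : ProbabilityTheory.IndepFun W (fun ω => (Y₀ ω, C₀ ω, Y₁ ω, C₁ ω)) P)
    (hind0 : ProbabilityTheory.IndepFun Y₀ C₀ P)
    (hind1 : ProbabilityTheory.IndepFun Y₁ C₁ P)
    (lam : ℝ → ℝ) (hlnn : ∀ t ≥ (0 : ℝ), 0 ≤ lam t)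
    (hloc : ∀ y : ℝ, IntervalIntegrable lam MeasureTheory.volume 0 y)
    (Λ : ℝ → ℝ) (hΛ : ∀ y, Λ y = ∫ t in (0 : ℝ)..y, lam t)
    (η₀ η₁ : ℝ)
    (hsurv0 : ∀ y ≥ (0 : ℝ),
      P {ω | Y₀ ω > y} = ENNReal.ofReal (Real.exp (-(Λ y * Real.exp η₀))))
    (hsurv1 : ∀ y ≥ (0 : ℝ),
      P {ω | Y₁ ω > y} = ENNReal.ofReal (Real.exp (-(Λ y * Real.exp η₁))))
    (p₀ p₁ a : ℝ)
    (hp₀ : p₀ = (P {ω | C₀ ω ≥ Y₀ ω}).toReal)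
    (hp₁ : p₁ = (P {ω | C₁ ω ≥ Y₁ ω}).toReal)
    (hpos : 0 < e * p₁ + (1 - e) * p₀)
    (ha : a = e * p₁ / (e * p₁ + (1 - e) * p₀)) :
    ∫ ω, (W ω - a) * Real.exp (W ω * η₁ + (1 - W ω) * η₀) *
        Λ (W ω * min (Y₁ ω) (C₁ ω) + (1 - W ω) * min (Y₀ ω) (C₀ ω)) ∂P = 0 := by
  obtain ⟨hi₁, hE₁⟩ :=
    integrable_and_integral_primitive_min_mul_exp_eq hY₁ hC₁ hind1 hY₁nn hC₁nn hloc hlnn hΛ hsurv1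
  obtain ⟨hi₀, hE₀⟩ :=
    integrable_and_integral_primitive_min_mul_exp_eq hY₀ hC₀ hind0 hY₀nn hC₀nn hloc hlnn hΛ hsurv0
  have hΛm : Measurable Λ := by
    rw [funext hΛ]; exact (continuous_integral_of_forall_intervalIntegrable hloc).measurable
  have hselect : ∀ ω, (W ω - a) * Real.exp (W ω * η₁ + (1 - W ω) * η₀) *
      Λ (W ω * min (Y₁ ω) (C₁ ω) + (1 - W ω) * min (Y₀ ω) (C₀ ω)) =
      (W ω - a) * (W ω * (Λ (min (Y₁ ω) (C₁ ω)) * Real.exp η₁) +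
        (1 - W ω) * (Λ (min (Y₀ ω) (C₀ ω)) * Real.exp η₀)) := fun ω ↦ by
    rcases hW01 ω with h | h <;> rw [h] <;> ring_nf
  rw [integral_congr_ae (.of_forall hselect)]
  refine (integral_sub_mul_select_eq hW hW01 hind
    (f₀ := fun v ↦ Λ (min v.1 v.2.1) * Real.exp η₀)
    (f₁ := fun v ↦ Λ (min v.2.2.1 v.2.2.2) * Real.exp η₁)
    (by fun_prop) (by fun_prop) hi₀ hi₁ a).trans ?_
  rw [heW, hE₁, hE₀, ← hp₁, ← hp₀, ha]
  field_simp
  ring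

/-- **Neyman orthogonality of the Cox full-likelihood score (paper, Prop. 2, ρ-derivative,
at a fixed covariate value).** With `W ⟂ (Y₀,C₀,Y₁,C₁)`, `Y_w ⟂ C_w`,
`P(Y_w > y) = exp(−Λ(y)·exp(η_w))` for `Λ(y) = ∫₀^y λ(t) dt`, `p_w = P(C_w ≥ Y_w)`,
`a = e·p₁/(e·p₁ + (1−e)·p₀)`, `η_W = W·η₁ + (1−W)·η₀` and `Y^c = min(Y_W, C_W)`,
one has `E[(W − a)·exp(η_W)·Λ(Y^c)] = 0`. -/
theorem dina_cox_full_likelihood_orthogonality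
    {Ω : Type*} [MeasurableSpace Ω] (P : Measure Ω) [IsProbabilityMeasure P]
    (W Y₀ C₀ Y₁ C₁ : Ω → ℝ)
    (hW : Measurable W) (hW01 : ∀ ω, W ω = 0 ∨ W ω = 1)
    (hY₀ : Measurable Y₀) (hC₀ : Measurable C₀)
    (hY₁ : Measurable Y₁) (hC₁ : Measurable C₁)
    (hY₀nn : ∀ ω, 0 ≤ Y₀ ω) (hC₀nn : ∀ ω, 0 ≤ C₀ ω)
    (hY₁nn : ∀ ω, 0 ≤ Y₁ ω) (hC₁nn : ∀ ω, 0 ≤ C₁ ω)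
    (e : ℝ) (he : e ∈ Ioo (0 : ℝ) 1) (heW : (P {ω | W ω = 1}).toReal = e)
    (hind : ProbabilityTheory.IndepFun W (fun ω => (Y₀ ω, C₀ ω, Y₁ ω, C₁ ω)) P)
    (hind0 : ProbabilityTheory.IndepFun Y₀ C₀ P)
    (hind1 : ProbabilityTheory.IndepFun Y₁ C₁ P)
    (lam : ℝ → ℝ) (hlm : Measurable lam) (hlnn : ∀ t ≥ (0 : ℝ), 0 ≤ lam t)
    (hloc : ∀ y : ℝ, IntervalIntegrable lam MeasureTheory.volume 0 y)
    (Λ : ℝ → ℝ) (hΛ : ∀ y, Λ y = ∫ t in (0 : ℝ)..y, lam t)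
    (η₀ η₁ : ℝ)
    (hsurv0 : ∀ y ≥ (0 : ℝ),
      P {ω | Y₀ ω > y} = ENNReal.ofReal (Real.exp (-(Λ y * Real.exp η₀))))
    (hsurv1 : ∀ y ≥ (0 : ℝ),
      P {ω | Y₁ ω > y} = ENNReal.ofReal (Real.exp (-(Λ y * Real.exp η₁))))
    (hΛtop : Filter.Tendsto Λ Filter.atTop Filter.atTop)
    (p₀ p₁ a : ℝ)
    (hp₀ : p₀ = (P {ω | C₀ ω ≥ Y₀ ω}).toReal)
    (hp₁ : p₁ = (P {ω | C₁ ω ≥ Y₁ ω}).toReal)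
    (hpos : 0 < e * p₁ + (1 - e) * p₀)
    (ha : a = e * p₁ / (e * p₁ + (1 - e) * p₀)) :
    ∫ ω, (W ω - a) * Real.exp (W ω * η₁ + (1 - W ω) * η₀) *
        Λ (W ω * min (Y₁ ω) (C₁ ω) + (1 - W ω) * min (Y₀ ω) (C₀ ω)) ∂P = 0 :=
  dina_cox_full_likelihood_orthogonality_general P W Y₀ C₀ Y₁ C₁ hW hW01 hY₀ hC₀ hY₁ hC₁ hY₀nn hC₀nn
    hY₁nn hC₁nn e heW hind hind0 hind1 lam hlnn hloc Λ hΛ η₀ η₁ hsurv0 hsurv1 p₀ p₁ a hp₀ hp₁ hpos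
    ha
end

section
/- Let (Ω, 𝒜, P) be a probability space, E a measurable space, X : Ω → E measurable, and T : Ω → {0, 1, …, K} a measurable (multi-valued) treatment variable. Let e_t : E → [0,1] and η_t : E → ℝ, t = 0, …, K, be bounded measurable functions such that for every t and every bounded measurable f : E → ℝ, E[1{T=t}·f(X)] = E[e_t(X)·f(X)]. Let ψ : ℝ → ℝ be twice continuously differentiable with ψ″ > 0, set V_t(x) := ψ″(η_t(x)), assume Σ_{s=0}^K e_s(x)·V_s(x) > 0 for all x, and define a_t(x) := e_t(x)·V_t(x) / Σ_{s=0}^K e_s(x)·V_s(x). Then for every t ∈ {0, …, K} and every bounded measurable g : E → ℝ, E[ ψ″(η_T(X)) · (1{T=t} − a_t(X)) · g(X) ] = 0, where η_T(ω) := η_{T(ω)}(X(ω)). (This is the multi-valued-treatment orthogonality underlying the generalized construction (8.5) of the paper.) -/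
open MeasureTheory Set

/-! Write the integrand as `h_T(X)` with `h_s = V_s · (1{s = t} − a_t) · g`. The propensity
identity, applied arm by arm, replaces the random arm `T` by the `e_s`-weighted sum
`∑_s e_s V_s (1{s = t} − a_t) g`, which vanishes pointwise since `a_t · ∑_s e_s V_s = e_t V_t`.
The identity applies because each `h_s` is bounded: `0 ≤ a_t ≤ 1` as `ψ'' > 0`, and `ψ''` is
continuous, hence bounded on the bounded range of `η_s`. -/

lemma exists_abs_mul_le {α : Type*} {f g : α → ℝ} (hf : ∃ C, ∀ x, |f x| ≤ C)
    (hg : ∃ C, ∀ x, |g x| ≤ C) : ∃ C, ∀ x, |f x * g x| ≤ C := by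
  obtain ⟨C, hC⟩ := hf
  obtain ⟨D, hD⟩ := hg
  exact ⟨C * D, fun x => by
    rw [abs_mul]
    exact mul_le_mul (hC x) (hD x) (abs_nonneg _) ((abs_nonneg _).trans (hC x))⟩

lemma Continuous.exists_abs_comp_le {α : Type*} {φ : ℝ → ℝ} (hφ : Continuous φ) {η : α → ℝ}
    (hη : ∃ C, ∀ x, |η x| ≤ C) : ∃ C, ∀ x, |φ (η x)| ≤ C := by
  obtain ⟨C, hC⟩ := hη
  obtain ⟨M, hM⟩ := (isCompact_Icc (a := -C) (b := C)).exists_bound_of_continuousOn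
    hφ.continuousOn
  exact ⟨M, fun x => hM (η x) (abs_le.mp (hC x))⟩

lemma Measurable.integrable_of_abs_le {Ω : Type*} [MeasurableSpace Ω] {μ : Measure Ω}
    [IsFiniteMeasure μ] {F : Ω → ℝ} (hF : Measurable F) (hb : ∃ C, ∀ ω, |F ω| ≤ C) :
    Integrable F μ := by
  obtain ⟨C, hC⟩ := hb
  exact .of_bound hF.aestronglyMeasurable C (ae_of_all _ hC)

lemma ContDiff.continuous_deriv_deriv {ψ : ℝ → ℝ} (hψ : ContDiff ℝ 2 ψ) :
    Continuous (deriv (deriv ψ)) := by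
  simpa [iteratedDeriv_eq_iterate] using hψ.continuous_iteratedDeriv 2 le_rfl

lemma sum_mul_indicator_sub_div_sum_eq_zero {ι : Type*} [Fintype ι] [DecidableEq ι]
    (w : ι → ℝ) (t : ι) (hw : ∑ s, w s ≠ 0) :
    ∑ s, w s * ((if s = t then (1 : ℝ) else 0) - w t / ∑ s, w s) = 0 := by
  simp only [mul_sub, Finset.sum_sub_distrib, mul_ite, mul_one, mul_zero,
    Finset.sum_ite_eq', Finset.mem_univ, if_true, ← Finset.sum_mul, mul_div_cancel₀ _ hw,
    sub_self]

lemma abs_indicator_sub_div_sum_le_one {ι : Type*} [Fintype ι] [DecidableEq ι]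
    {w : ι → ℝ} (hw : ∀ s, 0 ≤ w s) (s t : ι) :
    |(if s = t then (1 : ℝ) else 0) - w t / ∑ r, w r| ≤ 1 := by
  have h0 : 0 ≤ w t / ∑ r, w r := div_nonneg (hw t) (Finset.sum_nonneg fun r _ => hw r)
  have h1 : w t / ∑ r, w r ≤ 1 :=
    div_le_one_of_le₀ (Finset.single_le_sum (fun r _ => hw r) (Finset.mem_univ t))
      (Finset.sum_nonneg fun r _ => hw r)
  rw [abs_le]
  split_ifs <;> constructor <;> linarith

lemma integral_apply_treatment_eq_integral_sum_propensity
    {Ω E ι : Type*} [MeasurableSpace Ω] [MeasurableSpace E] [Fintype ι] [DecidableEq ι]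
    [MeasurableSpace ι] [MeasurableSingletonClass ι] {μ : Measure Ω} [IsFiniteMeasure μ]
    {X : Ω → E} (hX : Measurable X) {T : Ω → ι} (hT : Measurable T) {e : ι → E → ℝ}
    (hem : ∀ s, Measurable (e s)) (heb : ∀ s, ∃ C, ∀ x, |e s x| ≤ C)
    (hprop : ∀ t, ∀ f : E → ℝ, Measurable f → (∃ C, ∀ x, |f x| ≤ C) →
      ∫ ω, (if T ω = t then (1 : ℝ) else 0) * f (X ω) ∂μ = ∫ ω, e t (X ω) * f (X ω) ∂μ)
    {f : ι → E → ℝ} (hfm : ∀ s, Measurable (f s)) (hfb : ∀ s, ∃ C, ∀ x, |f s x| ≤ C) :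
    ∫ ω, f (T ω) (X ω) ∂μ = ∫ ω, ∑ s, e s (X ω) * f s (X ω) ∂μ := by
  have hindicator (s : ι) :
      Integrable (fun ω => (if T ω = s then (1 : ℝ) else 0) * f s (X ω)) μ :=
    ((Measurable.ite (hT (measurableSet_singleton s)) measurable_const measurable_const).mul
      ((hfm s).comp hX)).integrable_of_abs_le
      (exists_abs_mul_le ⟨1, fun ω => by split_ifs <;> simp⟩
        ((hfb s).imp fun _ hC ω => hC (X ω)))
  have hweighted (s : ι) : Integrable (fun ω => e s (X ω) * f s (X ω)) μ :=
    (((hem s).mul (hfm s)).comp hX).integrable_of_abs_le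
      (exists_abs_mul_le ((heb s).imp fun _ hC ω => hC (X ω))
        ((hfb s).imp fun _ hC ω => hC (X ω)))
  calc ∫ ω, f (T ω) (X ω) ∂μ
      = ∫ ω, ∑ s, (if T ω = s then (1 : ℝ) else 0) * f s (X ω) ∂μ := by
        simp [ite_mul]
    _ = ∑ s, ∫ ω, e s (X ω) * f s (X ω) ∂μ := by
        rw [integral_finsetSum _ fun s _ => hindicator s]
        exact Finset.sum_congr rfl fun s _ => hprop s (f s) (hfm s) (hfb s)
    _ = ∫ ω, ∑ s, e s (X ω) * f s (X ω) ∂μ :=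
        (integral_finsetSum _ fun s _ => hweighted s).symm

/-- **Multi-valued-treatment orthogonality (paper, Section 8, construction (8.5)).**
With generalized propensities `e_t(X)` (versions of `P(T = t | X)`), variance functions
`V_t(x) = ψ''(η_t(x))`, and modified propensities
`a_t(x) = e_t(x)V_t(x)/∑_s e_s(x)V_s(x)`, for every arm `t` and bounded measurable `g`,
`E[ψ''(η_T(X))·(1{T=t} − a_t(X))·g(X)] = 0`. -/
theorem dina_multivalued_orthogonality
    {Ω E : Type*} [MeasurableSpace Ω] [MeasurableSpace E]
    (P : Measure Ω) [IsProbabilityMeasure P] (K : ℕ)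
    (X : Ω → E) (hX : Measurable X)
    (T : Ω → Fin (K + 1)) (hT : Measurable T)
    (e η : Fin (K + 1) → E → ℝ)
    (hem : ∀ t, Measurable (e t)) (heb : ∀ t x, e t x ∈ Icc (0 : ℝ) 1)
    (hηm : ∀ t, Measurable (η t)) (hηb : ∀ t, ∃ C, ∀ x, |η t x| ≤ C)
    (ψ : ℝ → ℝ) (hψ : ContDiff ℝ 2 ψ) (hψpos : ∀ u, 0 < deriv (deriv ψ) u)
    (hpos : ∀ x, 0 < ∑ s, e s x * deriv (deriv ψ) (η s x))
    (hprop : ∀ t, ∀ f : E → ℝ, Measurable f → (∃ C, ∀ x, |f x| ≤ C) →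
      ∫ ω, (if T ω = t then (1 : ℝ) else 0) * f (X ω) ∂P
        = ∫ ω, e t (X ω) * f (X ω) ∂P) :
    ∀ t, ∀ g : E → ℝ, Measurable g → (∃ C, ∀ x, |g x| ≤ C) →
      ∫ ω, deriv (deriv ψ) (η (T ω) (X ω)) *
        ((if T ω = t then (1 : ℝ) else 0) - e t (X ω) * deriv (deriv ψ) (η t (X ω)) /
          (∑ s, e s (X ω) * deriv (deriv ψ) (η s (X ω)))) * g (X ω) ∂P = 0 := by
  intro t g hgm hgb
  set ψ'' := deriv (deriv ψ)
  have hψ'' : Continuous ψ'' := hψ.continuous_deriv_deriv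
  have hw (x : E) (s : Fin (K + 1)) : 0 ≤ e s x * ψ'' (η s x) :=
    mul_nonneg (heb s x).1 (hψpos _).le
  let h (s : Fin (K + 1)) (x : E) : ℝ := ψ'' (η s x) *
    ((if s = t then (1 : ℝ) else 0) - e t x * ψ'' (η t x) / ∑ r, e r x * ψ'' (η r x)) * g x
  have hhm (s : Fin (K + 1)) : Measurable (h s) := by
    have := hψ''.measurable
    fun_prop
  have hhb (s : Fin (K + 1)) : ∃ C, ∀ x, |h s x| ≤ C :=
    exists_abs_mul_le (exists_abs_mul_le (hψ''.exists_abs_comp_le (hηb s))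
      ⟨1, fun x => abs_indicator_sub_div_sum_le_one (hw x) s t⟩) hgb
  have he_bdd (s : Fin (K + 1)) : ∃ C, ∀ x, |e s x| ≤ C :=
    ⟨1, fun x => abs_le.mpr ⟨by linarith [(heb s x).1], (heb s x).2⟩⟩
  have hsum (x : E) : ∑ s, e s x * h s x = 0 := calc
    _ = (∑ s, e s x * ψ'' (η s x) * ((if s = t then (1 : ℝ) else 0) -
          e t x * ψ'' (η t x) / ∑ r, e r x * ψ'' (η r x))) * g x := by
      rw [Finset.sum_mul]
      exact Finset.sum_congr rfl fun s _ => by ring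
    _ = 0 := by
      rw [sum_mul_indicator_sub_div_sum_eq_zero (fun s => e s x * ψ'' (η s x)) t (hpos x).ne',
        zero_mul]
  rw [integral_apply_treatment_eq_integral_sum_propensity hX hT hem he_bdd hprop hhm hhb]
  simp [hsum]
end
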